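/- Fix α with 0 < α < 2 and a natural number h ≥ 1. Then the Slicer Map auto-correlation φ(m + h, m) is asymptotic to (4/(2−α)) m^(2−α) as m → ∞. -/

import Mathlib

open Filter Topology

/-- ℓ⁺_m(α) = 1 - (m + 2^(1/α))^(-α) -/
noncomputable def ellp (α : ℝ) (m : ℕ) : ℝ := 1 - ((m : ℝ) + (2 : ℝ) ^ (1/α)) ^ (-α)

/-- Δ_k(α) = ℓ⁺_k(α) - ℓ⁺_{k-1}(α) -/
noncomputable def Dlt (α : ℝ) (k : ℕ) : ℝ := ellp α k - ellp α (k - 1)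

/-- Position-position auto-correlation of the Slicer Map, for times m ≤ n. -/
noncomputable def phi (α : ℝ) (n m : ℕ) : ℝ :=
  2 * ∑ k ∈ Finset.Icc 1 m, (k : ℝ) ^ 2 * Dlt α k
    + 2 * m * ∑ k ∈ Finset.Icc (m + 1) n, (k : ℝ) * Dlt α k
    + 2 * m * n * ∑' k : ℕ, Dlt α (n + 1 + k)

/-!
With `F(m) = 1 - ℓ⁺_m(α) = (m + 2^(1/α))^(-α)` one has `Δ_k = F(k-1) - F(k)`, and summation by
parts (the tail series telescopes to `F(n)`) gives the closed form
`φ(n, m) = 2 ∑_{i<m} (2i+1) F(i) + 2m ∑_{m ≤ i < n} F(i)`.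
The terms `(2i+1) F(i)` are asymptotic to `2 i^(1-α)`, as are the increments
`(2/(2-α)) ((i+1)^(2-α) - i^(2-α))`; since these are nonnegative with divergent sum, the partial
sums are asymptotic too, so the first part is `~ (4/(2-α)) m^(2-α)`. For `n = m + h` the second
part is `O(h m^(1-α))`, which is negligible because `α < 2`.
-/

open Finset Asymptotics

theorem sum_Icc_sq_mul_sub_pred (F : ℕ → ℝ) (m : ℕ) :
    ∑ k ∈ Icc 1 m, (k : ℝ) ^ 2 * (F (k - 1) - F k)
      = ∑ i ∈ range m, (2 * (i : ℝ) + 1) * F i - (m : ℝ) ^ 2 * F m := by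
  induction m with
  | zero => simp
  | succ m ih =>
    rw [sum_Icc_succ_top (by omega), ih, sum_range_succ, Nat.add_sub_cancel]
    push_cast
    ring

theorem sum_Icc_mul_sub_pred (F : ℕ → ℝ) {m n : ℕ} (hmn : m ≤ n) :
    ∑ k ∈ Icc (m + 1) n, (k : ℝ) * (F (k - 1) - F k)
      = ∑ i ∈ Ico m n, F i + m * F m - n * F n := by
  induction n, hmn using Nat.le_induction with
  | base => simp
  | succ n hmn ih =>
    rw [sum_Icc_succ_top (by omega), ih, sum_Ico_succ_top hmn, Nat.add_sub_cancel]
    push_cast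
    ring

theorem hasSum_sub_succ_of_antitone {F : ℕ → ℝ} (hF : Antitone F)
    (hlim : Tendsto F atTop (𝓝 0)) : HasSum (fun k => F k - F (k + 1)) (F 0) := by
  rw [hasSum_iff_tendsto_nat_of_nonneg fun k => sub_nonneg.2 (hF k.le_succ)]
  simp_rw [sum_range_sub']
  simpa using tendsto_const_nhds.sub hlim

theorem Asymptotics.IsEquivalent.sum_range {f g : ℕ → ℝ} (h : f ~[atTop] g) (hg : 0 ≤ g)
    (h'g : Tendsto (fun n => ∑ i ∈ range n, g i) atTop atTop) :
    (fun n => ∑ i ∈ range n, f i) ~[atTop] fun n => ∑ i ∈ range n, g i := by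
  simpa only [IsEquivalent, Pi.sub_def, sum_sub_distrib] using h.isLittleO.sum_range hg h'g

theorem isLittleO_rpow_rpow_atTop {a b : ℝ} (hab : a < b) :
    (fun x : ℝ => x ^ a) =o[atTop] fun x => x ^ b := by
  refine (isLittleO_iff_tendsto' ?_).2 ?_
  · filter_upwards [eventually_gt_atTop 0] with x hx h0
    exact absurd h0 (Real.rpow_pos_of_pos hx b).ne'
  · refine (tendsto_rpow_neg_atTop (sub_pos.2 hab)).congr' ?_
    filter_upwards [eventually_gt_atTop 0] with x hx
    rw [← Real.rpow_sub hx, neg_sub]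

theorem tendsto_rpow_add_one_sub_rpow_div (p : ℝ) :
    Tendsto (fun x : ℝ => ((x + 1) ^ p - x ^ p) / x ^ (p - 1)) atTop (𝓝 p) := by
  have hderiv : HasDerivAt (fun t : ℝ => (1 + t) ^ p) p 0 := by
    simpa using ((hasDerivAt_id (0 : ℝ)).const_add 1).rpow_const (p := p) (Or.inl (by norm_num))
  refine ((hasDerivAt_iff_tendsto_slope_zero.1 hderiv).comp
    (tendsto_inv_atTop_nhdsGT_zero.mono_right (nhdsGT_le_nhdsNE 0))).congr' ?_
  filter_upwards [eventually_gt_atTop 0] with x hx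
  simp only [Function.comp_apply, smul_eq_mul, inv_inv, zero_add, add_zero, Real.one_rpow]
  rw [Real.rpow_sub_one hx.ne', show 1 + x⁻¹ = (x + 1) / x by field_simp,
    Real.div_rpow (by linarith) hx.le]
  field_simp

theorem isEquivalent_two_mul_add_one_mul_rpow (α c : ℝ) :
    (fun i : ℕ => (2 * (i : ℝ) + 1) * ((i : ℝ) + c) ^ (-α))
      ~[atTop] fun i => 2 * (i : ℝ) ^ (1 - α) := by
  have h1 : (fun i : ℕ => 2 * (i : ℝ) + 1) ~[atTop] fun i => 2 * (i : ℝ) :=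
    IsEquivalent.refl.add_const_of_norm_tendsto_atTop
      (tendsto_norm_atTop_atTop.comp (tendsto_natCast_atTop_atTop.const_mul_atTop two_pos))
  have h2 : (fun i : ℕ => ((i : ℝ) + c) ^ (-α)) ~[atTop] fun i => (i : ℝ) ^ (-α) :=
    (IsEquivalent.refl.add_const_of_norm_tendsto_atTop
      (tendsto_norm_atTop_atTop.comp tendsto_natCast_atTop_atTop)).rpow fun i => Nat.cast_nonneg i
  refine (h1.mul h2).congr_right ?_
  filter_upwards [eventually_gt_atTop 0] with i hi
  simp only [Pi.mul_apply]
  rw [sub_eq_add_neg, Real.rpow_add (by positivity), Real.rpow_one, mul_assoc]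

theorem isEquivalent_sum_range_two_mul_add_one_mul_rpow {α : ℝ} (hα2 : α < 2) (c : ℝ) :
    (fun m : ℕ => ∑ i ∈ range m, (2 * (i : ℝ) + 1) * ((i : ℝ) + c) ^ (-α))
      ~[atTop] fun m => 2 / (2 - α) * (m : ℝ) ^ (2 - α) := by
  have hp : 0 < 2 - α := by linarith
  set b : ℕ → ℝ := fun i => 2 / (2 - α) * (((i : ℝ) + 1) ^ (2 - α) - (i : ℝ) ^ (2 - α))
  have hb_sum : ∀ m, ∑ i ∈ range m, b i = 2 / (2 - α) * (m : ℝ) ^ (2 - α) := fun m => by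
    rw [← mul_sum]
    simpa [Real.zero_rpow hp.ne'] using congrArg (2 / (2 - α) * ·)
      (sum_range_sub (fun i : ℕ => (i : ℝ) ^ (2 - α)) m)
  have hb_nonneg : 0 ≤ b := fun i => mul_nonneg (by positivity)
    (sub_nonneg.2 (Real.rpow_le_rpow (Nat.cast_nonneg i) (by linarith) hp.le))
  have hb_equiv : b ~[atTop] fun i => 2 * (i : ℝ) ^ (1 - α) := by
    refine (isEquivalent_iff_tendsto_one ?_).2 ?_
    · filter_upwards [eventually_gt_atTop 0] with i hi
      positivity
    · have := ((tendsto_rpow_add_one_sub_rpow_div (2 - α)).comp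
        tendsto_natCast_atTop_atTop).div_const (2 - α)
      rw [div_self hp.ne'] at this
      refine this.congr' ?_
      filter_upwards [eventually_gt_atTop 0] with i hi
      simp only [Function.comp_apply, Pi.div_apply, b, show 2 - α - 1 = 1 - α by ring]
      field_simp
  have hb_top : Tendsto (fun m => ∑ i ∈ range m, b i) atTop atTop := by
    simp only [hb_sum]
    exact ((tendsto_rpow_atTop hp).comp tendsto_natCast_atTop_atTop).const_mul_atTop (by positivity)
  simpa only [hb_sum] using
    ((isEquivalent_two_mul_add_one_mul_rpow α c).trans hb_equiv.symm).sum_range hb_nonneg hb_top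

/-- `1 - ℓ⁺_m(α)`. -/
noncomputable def ellTail (α : ℝ) (m : ℕ) : ℝ := ((m : ℝ) + (2 : ℝ) ^ (1 / α)) ^ (-α)

section ellTail

variable {α : ℝ}

theorem Dlt_eq_ellTail_sub (k : ℕ) : Dlt α k = ellTail α (k - 1) - ellTail α k := by
  simp only [Dlt, ellp, ellTail]
  ring

theorem ellTail_pos (m : ℕ) : 0 < ellTail α m :=
  Real.rpow_pos_of_pos (by positivity) _

theorem ellTail_antitone (hα : 0 < α) : Antitone (ellTail α) := fun i j hij =>
  Real.rpow_le_rpow_of_nonpos (by positivity) (by gcongr) (by linarith)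

theorem ellTail_le_rpow (hα : 0 < α) {m : ℕ} (hm : 0 < m) : ellTail α m ≤ (m : ℝ) ^ (-α) :=
  Real.rpow_le_rpow_of_nonpos (by positivity) (by simp; positivity) (by linarith)

theorem tendsto_ellTail_atTop (hα : 0 < α) : Tendsto (ellTail α) atTop (𝓝 0) :=
  (tendsto_rpow_neg_atTop hα).comp
    (tendsto_atTop_add_const_right _ _ tendsto_natCast_atTop_atTop)

theorem tsum_Dlt_succ_add (hα : 0 < α) (n : ℕ) : ∑' k, Dlt α (n + 1 + k) = ellTail α n := by
  have hF : Antitone fun k => ellTail α (n + k) :=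
    (ellTail_antitone hα).comp_monotone fun _ _ h => by omega
  have hlim : Tendsto (fun k => ellTail α (n + k)) atTop (𝓝 0) :=
    (tendsto_ellTail_atTop hα).comp (tendsto_atTop_mono (Nat.le_add_left · n) tendsto_id)
  convert (hasSum_sub_succ_of_antitone hF hlim).tsum_eq using 1
  · congr 1 with k
    rw [Dlt_eq_ellTail_sub, show n + 1 + k - 1 = n + k by omega,
      show n + 1 + k = n + (k + 1) by omega]
  · rfl

theorem phi_eq (hα : 0 < α) {m n : ℕ} (hmn : m ≤ n) :
    phi α n m = 2 * ∑ i ∈ range m, (2 * (i : ℝ) + 1) * ellTail α i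
      + 2 * m * ∑ i ∈ Ico m n, ellTail α i := by
  rw [phi, tsum_Dlt_succ_add hα]
  simp only [Dlt_eq_ellTail_sub]
  rw [sum_Icc_sq_mul_sub_pred, sum_Icc_mul_sub_pred _ hmn]
  ring

theorem isLittleO_natCast_mul_sum_Ico_ellTail (hα : 0 < α) (h : ℕ) :
    (fun m : ℕ => (m : ℝ) * ∑ i ∈ Ico m (m + h), ellTail α i)
      =o[atTop] fun m => (m : ℝ) ^ (2 - α) := by
  refine IsBigO.trans_isLittleO (g := fun m : ℕ => (m : ℝ) ^ (1 - α)) ?_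
    ((isLittleO_rpow_rpow_atTop (by linarith)).comp_tendsto tendsto_natCast_atTop_atTop)
  refine IsBigO.of_bound h ?_
  filter_upwards [eventually_gt_atTop 0] with m hm
  have hsum : ∑ i ∈ Ico m (m + h), ellTail α i ≤ h * (m : ℝ) ^ (-α) :=
    calc ∑ i ∈ Ico m (m + h), ellTail α i ≤ ∑ _i ∈ Ico m (m + h), ellTail α m :=
          sum_le_sum fun i hi => ellTail_antitone hα (mem_Ico.1 hi).1
      _ = h * ellTail α m := by simp
      _ ≤ h * (m : ℝ) ^ (-α) := by gcongr; exact ellTail_le_rpow hα hm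
  have hnonneg : 0 ≤ ∑ i ∈ Ico m (m + h), ellTail α i :=
    sum_nonneg fun i _ => (ellTail_pos i).le
  rw [Real.norm_of_nonneg (by positivity), Real.norm_of_nonneg (by positivity), sub_eq_add_neg,
    Real.rpow_add (by positivity), Real.rpow_one]
  calc (m : ℝ) * ∑ i ∈ Ico m (m + h), ellTail α i ≤ m * (h * (m : ℝ) ^ (-α)) := by gcongr
    _ = h * (m * (m : ℝ) ^ (-α)) := by ring

end ellTail

theorem stmt_16_general (α : ℝ) (hα : 0 < α) (hα2 : α < 2) (h : ℕ) :
    Tendsto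
      (fun m : ℕ => phi α (m + h) m / ((4 / (2 - α)) * (m : ℝ) ^ ((2 : ℝ) - α)))
      atTop (𝓝 1) := by
  have hmain : (fun m : ℕ => 2 * ∑ i ∈ range m, (2 * (i : ℝ) + 1) * ellTail α i)
      ~[atTop] fun m => 4 / (2 - α) * (m : ℝ) ^ (2 - α) := by
    refine (IsEquivalent.refl.mul
      (isEquivalent_sum_range_two_mul_add_one_mul_rpow hα2 ((2 : ℝ) ^ (1 / α)))).congr_right ?_
    filter_upwards with m
    simp only [Pi.mul_apply]
    ring
  have hrem : (fun m : ℕ => 2 * m * ∑ i ∈ Ico m (m + h), ellTail α i)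
      =o[atTop] fun m => 4 / (2 - α) * (m : ℝ) ^ (2 - α) := by
    simpa only [mul_assoc] using ((isLittleO_natCast_mul_sum_Ico_ellTail hα h).const_mul_left 2)
      |>.const_mul_right' (Ne.isUnit (by positivity))
  have hphi := hmain.add_isLittleO hrem
  refine ((isEquivalent_iff_tendsto_one ?_).1 hphi).congr fun m => ?_
  · filter_upwards [eventually_gt_atTop 0] with m hm
    positivity
  · rw [Pi.div_apply, Pi.add_apply, phi_eq hα (Nat.le_add_right m h)]

theorem stmt_16 (α : ℝ) (hα : 0 < α) (hα2 : α < 2) (h : ℕ) (hh : 1 ≤ h) :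
    Tendsto
      (fun m : ℕ => phi α (m + h) m / ((4 / (2 - α)) * (m : ℝ) ^ ((2 : ℝ) - α)))
      atTop (𝓝 1) :=
  stmt_16_general α hα hα2 h
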